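/- Let K_ν be continuous with support [-τ, τ], satisfying ∫ K_ν(x)x^j dx = 0 for j = 0,…,ν-1 and j = ν+1,…,k-1, ∫ K_ν(x)x^ν dx = (-1)^ν ν!, and ∫ K_ν(x)x^k dx = β. If x : ℝ → ℝ is k times continuously differentiable with |x^{(k)}| ≤ M everywhere, then for all t and h > 0, |(1/h^{ν+1}) ∫ K_ν((t-u)/h) x(u) du − x^{(ν)}(t)| ≤ h^{k-ν} (M/k!) ∫_{-τ}^{τ} |K_ν(v)| |v|^k dv. -/

import Mathlib

open MeasureTheory Finset

/-! After the substitution `u = t - h v` the estimator is `h^(-ν) ∫ K(v) x(t - h v) dv`.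
Expanding `x(t - h v)` around `t` to order `k - 1`, the moment conditions annihilate every term
of the Taylor polynomial except the `ν`-th, which contributes exactly `h^ν x^(ν)(t)`; the Lagrange
remainder is at most `M h^k |v|^k / k!`, and integrating it against `|K|` gives the bound. -/

theorem abs_sub_sum_taylor_le {f : ℝ → ℝ} {n : ℕ} {M : ℝ} (hf : ContDiff ℝ n f)
    (hM : ∀ u, |iteratedDeriv n f u| ≤ M) (a y : ℝ) :
    |f y - ∑ j ∈ range n, iteratedDeriv j f a * (y - a) ^ j / j.factorial|
      ≤ M * |y - a| ^ n / n.factorial := by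
  rcases n with _ | n
  · simpa using hM y
  rcases eq_or_ne a y with rfl | hay
  · simp [sum_range_succ', zero_pow]
  obtain ⟨c, -, hc⟩ := taylor_mean_remainder_lagrange_iteratedDeriv hay hf.contDiffOn
  have hu : UniqueDiffOn ℝ (Set.uIcc a y) := uniqueDiffOn_uIcc hay
  have hcoeff : ∀ j ∈ range (n + 1), ((j.factorial : ℝ)⁻¹ * (y - a) ^ j) •
      iteratedDerivWithin j f (Set.uIcc a y) a
        = iteratedDeriv j f a * (y - a) ^ j / j.factorial := by
    intro j hj
    rw [iteratedDerivWithin_eq_iteratedDeriv hu (hf.contDiffAt.of_le (by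
      norm_cast; exact (mem_range.1 hj).le)) Set.left_mem_uIcc, smul_eq_mul]
    ring
  rw [taylor_within_apply, sum_congr rfl hcoeff] at hc
  rw [hc, abs_div, abs_mul, abs_pow, Nat.abs_cast]
  gcongr
  exact hM c

theorem abs_sub_sum_taylor_comp_sub_mul_le {f : ℝ → ℝ} {n : ℕ} {M : ℝ} (hf : ContDiff ℝ n f)
    (hM : ∀ u, |iteratedDeriv n f u| ≤ M) (t h v : ℝ) :
    |f (t - h * v) - ∑ j ∈ range n, iteratedDeriv j f t * (-h) ^ j / j.factorial * v ^ j|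
      ≤ M * |h| ^ n / n.factorial * |v| ^ n := by
  have hshift : t - h * v - t = -h * v := by ring
  have key := abs_sub_sum_taylor_le hf hM t (t - h * v)
  simp only [hshift, mul_pow, abs_mul, abs_neg] at key
  convert key using 3
  · exact sum_congr rfl fun j _ => by ring
  · ring

theorem integral_comp_sub_div {E : Type*} [NormedAddCommGroup E] [NormedSpace ℝ E]
    (F : ℝ → E) (t h : ℝ) : ∫ u, F ((t - u) / h) = |h| • ∫ v, F v := by
  rw [integral_sub_left_eq_self (fun w => F (w / h)) volume t, Measure.integral_comp_div]

theorem integral_kernel_comp_sub_div {K x : ℝ → ℝ} {h : ℝ} (hh : 0 < h) (t : ℝ) :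
    ∫ u, K ((t - u) / h) * x u = h * ∫ v, K v * x (t - h * v) := by
  have hu : ∀ u, t - h * ((t - u) / h) = u := fun u => by field_simp; ring
  simpa only [hu, abs_of_pos hh, smul_eq_mul] using
    integral_comp_sub_div (fun v => K v * x (t - h * v)) t h

theorem Continuous.integrable_mul_of_hasCompactSupport {K g : ℝ → ℝ} (hK : Continuous K)
    (hKs : HasCompactSupport K) (hg : Continuous g) : Integrable fun v => K v * g v :=
  (hK.mul hg).integrable_of_hasCompactSupport hKs.mul_right

theorem integral_mul_sum_monomials_of_moments {K : ℝ → ℝ} {k ν : ℕ} (hν : ν < k)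
    (hint : ∀ j < k, Integrable fun v => K v * v ^ j)
    (hmom : ∀ j < k, j ≠ ν → ∫ v, K v * v ^ j = 0) (c : ℕ → ℝ) :
    ∫ v, K v * ∑ j ∈ range k, c j * v ^ j = c ν * ∫ v, K v * v ^ ν := by
  simp_rw [mul_sum, mul_left_comm (K _)]
  rw [integral_finsetSum _ fun j hj => (hint j (mem_range.1 hj)).const_mul (c j),
    sum_eq_single_of_mem ν (mem_range.2 hν) fun j hj hjν => by
      rw [integral_const_mul, hmom j (mem_range.1 hj) hjν, mul_zero],
    integral_const_mul]

theorem abs_integral_mul_le_of_abs_le {K g w : ℝ → ℝ} {s : Set ℝ} {C : ℝ}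
    (hKs : ∀ v ∉ s, K v = 0) (hKg : Integrable fun v => K v * g v)
    (hKw : IntegrableOn (fun v => |K v| * w v) s) (hg : ∀ v, |g v| ≤ C * w v) :
    |∫ v, K v * g v| ≤ C * ∫ v in s, |K v| * w v := by
  rw [← setIntegral_eq_integral_of_forall_compl_eq_zero fun v hv => by rw [hKs v hv, zero_mul],
    ← integral_const_mul]
  refine (abs_integral_le_integral_abs).trans (setIntegral_mono hKg.integrableOn.abs
    (hKw.const_mul C) fun v => ?_)
  rw [abs_mul, mul_left_comm]
  exact mul_le_mul_of_nonneg_left (hg v) (abs_nonneg _)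

theorem integral_mul_sum_taylor_comp_sub_mul {K : ℝ → ℝ} {k ν : ℕ} (hν : ν < k)
    (hint : ∀ j < k, Integrable fun v => K v * v ^ j)
    (hmom : ∀ j < k, j ≠ ν → ∫ v, K v * v ^ j = 0)
    (hmomν : ∫ v, K v * v ^ ν = (-1) ^ ν * ν.factorial) (f : ℝ → ℝ) (t h : ℝ) :
    ∫ v, K v * ∑ j ∈ range k, iteratedDeriv j f t * (-h) ^ j / j.factorial * v ^ j
      = h ^ ν * iteratedDeriv ν f t := by
  rw [integral_mul_sum_monomials_of_moments hν hint hmom, hmomν]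
  have hsign : (-h) ^ ν * (-1) ^ ν = h ^ ν := by rw [← mul_pow, neg_mul_neg, mul_one]
  field_simp
  linear_combination iteratedDeriv ν f t * hsign

theorem kernel_derivative_estimator_bias_general (ν k : ℕ) (hk : ν + 2 ≤ k)
    (τ : ℝ) (Kν : ℝ → ℝ) (hKcont : Continuous Kν)
    (hKsupp : ∀ v : ℝ, v ∉ Set.Icc (-τ) τ → Kν v = 0)
    (hmom0 : ∀ j : ℕ, j < k → j ≠ ν → (∫ v : ℝ, Kν v * v ^ j) = 0)
    (hmomν : (∫ v : ℝ, Kν v * v ^ ν) = (-1 : ℝ) ^ ν * (Nat.factorial ν))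
    (x : ℝ → ℝ) (M : ℝ) (hx : ContDiff ℝ k x)
    (hxk : ∀ u : ℝ, |iteratedDeriv k x u| ≤ M) :
    ∀ (t h : ℝ), 0 < h →
      |(1 / h ^ (ν + 1)) * (∫ u : ℝ, Kν ((t - u) / h) * x u) - iteratedDeriv ν x t|
        ≤ h ^ (k - ν) * (M / Nat.factorial k) * ∫ v in Set.Icc (-τ) τ, |Kν v| * |v| ^ k := by
  intro t h hh
  have hKs : HasCompactSupport Kν := HasCompactSupport.intro isCompact_Icc hKsupp
  set P : ℝ → ℝ := fun v => ∑ j ∈ range k, iteratedDeriv j x t * (-h) ^ j / j.factorial * v ^ j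
  have hKP : ∫ v, Kν v * P v = h ^ ν * iteratedDeriv ν x t :=
    integral_mul_sum_taylor_comp_sub_mul (by omega)
      (fun j _ => hKcont.integrable_mul_of_hasCompactSupport hKs (continuous_pow j))
      hmom0 hmomν x t h
  have hP : Continuous P := by fun_prop
  have hxP : Continuous fun v => x (t - h * v) - P v := by fun_prop
  have hsplit : ∫ v, Kν v * x (t - h * v)
      = (∫ v, Kν v * (x (t - h * v) - P v)) + h ^ ν * iteratedDeriv ν x t := by
    rw [← hKP, ← integral_add (hKcont.integrable_mul_of_hasCompactSupport hKs hxP)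
      (hKcont.integrable_mul_of_hasCompactSupport hKs hP)]
    simp_rw [mul_sub, sub_add_cancel]
  have hremainder := abs_integral_mul_le_of_abs_le hKsupp
    (hKcont.integrable_mul_of_hasCompactSupport hKs hxP)
    (by fun_prop : Continuous fun v => |Kν v| * |v| ^ k).integrableOn_Icc
    (abs_sub_sum_taylor_comp_sub_mul_le hx hxk t h)
  have hhk : h ^ k = h ^ (k - ν) * h ^ ν := by rw [← pow_add, Nat.sub_add_cancel (by omega)]
  set R := ∫ v, Kν v * (x (t - h * v) - P v)
  have hbias : 1 / h ^ (ν + 1) * (h * (R + h ^ ν * iteratedDeriv ν x t)) - iteratedDeriv ν x t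
      = R / h ^ ν := by
    field_simp
    ring
  rw [integral_kernel_comp_sub_div hh, hsplit, hbias, abs_div, abs_of_pos (pow_pos hh ν),
    div_le_iff₀ (pow_pos hh ν)]
  rw [abs_of_pos hh, hhk] at hremainder
  exact hremainder.trans_eq (by ring)

theorem kernel_derivative_estimator_bias (ν k : ℕ) (hν : 1 ≤ ν) (hk : ν + 2 ≤ k)
    (τ : ℝ) (hτ : 0 < τ) (Kν : ℝ → ℝ) (hKcont : Continuous Kν)
    (hKsupp : ∀ v : ℝ, v ∉ Set.Icc (-τ) τ → Kν v = 0)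
    (hmom0 : ∀ j : ℕ, j < k → j ≠ ν → (∫ v : ℝ, Kν v * v ^ j) = 0)
    (hmomν : (∫ v : ℝ, Kν v * v ^ ν) = (-1 : ℝ) ^ ν * (Nat.factorial ν))
    (x : ℝ → ℝ) (M : ℝ) (hx : ContDiff ℝ k x)
    (hxk : ∀ u : ℝ, |iteratedDeriv k x u| ≤ M) :
    ∀ (t h : ℝ), 0 < h →
      |(1 / h ^ (ν + 1)) * (∫ u : ℝ, Kν ((t - u) / h) * x u) - iteratedDeriv ν x t|
        ≤ h ^ (k - ν) * (M / Nat.factorial k) * ∫ v in Set.Icc (-τ) τ, |Kν v| * |v| ^ k :=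
  kernel_derivative_estimator_bias_general ν k hk τ Kν hKcont hKsupp hmom0 hmomν x M hx hxk
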